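/- Let n, m be positive integers, F an n×n real matrix, G an n×m real matrix, Q a symmetric n×n real matrix, S an n×m real matrix, R a symmetric positive-definite m×m real matrix, P a symmetric n×n real matrix satisfying the Algebraic Riccati Equation FᵀP + PF + Q = (PG + S)R⁻¹(PG + S)ᵀ, and K = −R⁻¹(PG + S)ᵀ. Suppose z : [0,∞) → ℝⁿ is differentiable, u : [0,∞) → ℝᵐ is continuous, ż(t) = Fz(t) + Gu(t) for all t ≥ 0, z(t) → 0 as t → ∞, and both t ↦ z(t)ᵀQz(t) + 2z(t)ᵀSu(t) + u(t)ᵀRu(t) and t ↦ (u(t) − Kz(t))ᵀR(u(t) − Kz(t)) are integrable on [0,∞). Then (1/2)∫₀^∞ (z(t)ᵀQz(t) + 2z(t)ᵀSu(t) + u(t)ᵀRu(t)) dt ≥ (1/2)z(0)ᵀPz(0), with equality if u(t) = Kz(t) for all t ≥ 0. In particular the linear feedback u = Kz is optimal among all such control trajectories. -/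

import Mathlib

/-!
Along any trajectory, the Riccati equation lets one complete the square in the running cost:
`zᵀQz + 2zᵀSu + uᵀRu = (u - Kz)ᵀR(u - Kz) - d/dt (zᵀPz)`.
Integrating over `[0, ∞)` and using `z(t) → 0`, the cost equals `∫ (u - Kz)ᵀR(u - Kz) + z(0)ᵀPz(0)`;
the integral is nonnegative since `R` is positive definite, and vanishes for `u = Kz`.
-/

open Matrix MeasureTheory Filter Set Topology

section Derivative

variable {𝕜 : Type*} [NontriviallyNormedField 𝕜] {ι κ : Type*} [Fintype ι]

theorem HasDerivAt.dotProduct {f g : 𝕜 → ι → 𝕜} {f' g' : ι → 𝕜} {t : 𝕜}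
    (hf : HasDerivAt f f' t) (hg : HasDerivAt g g' t) :
    HasDerivAt (fun s => f s ⬝ᵥ g s) (f' ⬝ᵥ g t + f t ⬝ᵥ g') t := by
  simp only [_root_.dotProduct, ← Finset.sum_add_distrib]
  exact HasDerivAt.fun_sum fun i _ => (hasDerivAt_pi.mp hf i).mul (hasDerivAt_pi.mp hg i)

theorem HasDerivAt.mulVec (A : Matrix κ ι 𝕜) {f : 𝕜 → ι → 𝕜} {f' : ι → 𝕜} {t : 𝕜}
    (hf : HasDerivAt f f' t) : HasDerivAt (fun s => A *ᵥ f s) (A *ᵥ f') t := by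
  refine hasDerivAt_pi.mpr fun k => ?_
  simp only [Matrix.mulVec, _root_.dotProduct]
  exact HasDerivAt.fun_sum fun j _ => (hasDerivAt_pi.mp hf j).const_mul (A k j)

end Derivative

section Riccati

variable {α : Type*} [CommRing α] {ι κ : Type*} [Fintype ι] [Fintype κ]

theorem Matrix.dotProduct_mulVec_sub_sub {R : Matrix κ κ α} (hR : R.IsSymm) (a b : κ → α) :
    (a - b) ⬝ᵥ R *ᵥ (a - b) = a ⬝ᵥ R *ᵥ a - 2 * (a ⬝ᵥ R *ᵥ b) + b ⬝ᵥ R *ᵥ b := by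
  have hba : b ⬝ᵥ R *ᵥ a = a ⬝ᵥ R *ᵥ b := by
    rw [← dotProduct_transpose_mulVec, hR.eq]
  simp only [mulVec_sub, dotProduct_sub, sub_dotProduct, hba]
  ring

theorem riccati_cost_eq_sub_lyapunov_deriv [DecidableEq κ] {F P Q : Matrix ι ι α}
    {G S : Matrix ι κ α} {R : Matrix κ κ α} {K : Matrix κ ι α} (hRdet : IsUnit R.det)
    (hR : R.IsSymm) (hP : P.IsSymm)
    (hARE : Fᵀ * P + P * F + Q = (P * G + S) * R⁻¹ * (P * G + S)ᵀ)
    (hK : K = -(R⁻¹ * (P * G + S)ᵀ)) (x : ι → α) (v : κ → α) :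
    x ⬝ᵥ Q *ᵥ x + 2 * (x ⬝ᵥ S *ᵥ v) + v ⬝ᵥ R *ᵥ v =
      (v - K *ᵥ x) ⬝ᵥ R *ᵥ (v - K *ᵥ x) -
        ((F *ᵥ x + G *ᵥ v) ⬝ᵥ P *ᵥ x + x ⬝ᵥ P *ᵥ (F *ᵥ x + G *ᵥ v)) := by
  have hRK : R * K = -(P * G + S)ᵀ := by
    rw [hK, Matrix.mul_neg, ← Matrix.mul_assoc, mul_nonsing_inv R hRdet, Matrix.one_mul]
  have hMK : (P * G + S) * K = -(Fᵀ * P + P * F + Q) := by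
    rw [hK, Matrix.mul_neg, ← Matrix.mul_assoc, ← hARE]
  have hcross : v ⬝ᵥ R *ᵥ (K *ᵥ x) = -(x ⬝ᵥ (P * G + S) *ᵥ v) := by
    rw [mulVec_mulVec, hRK, neg_mulVec, dotProduct_neg, dotProduct_transpose_mulVec]
  have hsquare : (K *ᵥ x) ⬝ᵥ R *ᵥ (K *ᵥ x) = x ⬝ᵥ (Fᵀ * P + P * F + Q) *ᵥ x := by
    rw [mulVec_mulVec, hRK, neg_mulVec, dotProduct_neg, dotProduct_transpose_mulVec,
      mulVec_mulVec, hMK, neg_mulVec, dotProduct_neg, neg_neg]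
  have hdrift : (F *ᵥ x) ⬝ᵥ P *ᵥ x = x ⬝ᵥ (Fᵀ * P) *ᵥ x := by
    rw [dotProduct_comm, ← mulVec_mulVec, dotProduct_transpose_mulVec]
  have hinput : (G *ᵥ v) ⬝ᵥ P *ᵥ x = x ⬝ᵥ (P * G) *ᵥ v := by
    rw [← dotProduct_transpose_mulVec, hP.eq, mulVec_mulVec]
  rw [dotProduct_mulVec_sub_sub hR, hcross, hsquare]
  simp only [add_dotProduct, dotProduct_add, mulVec_add, add_mulVec, hdrift, hinput,
    mulVec_mulVec]
  ring

end Riccati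

theorem setIntegral_Ici_eq_integral_add_of_eq_sub_deriv {c e V V' : ℝ → ℝ} {a : ℝ}
    (hV : ∀ t ∈ Ici a, HasDerivAt V (V' t) t) (hVlim : Tendsto V atTop (𝓝 0))
    (hc : IntegrableOn c (Ici a)) (he : IntegrableOn e (Ici a))
    (hce : ∀ t ∈ Ici a, c t = e t - V' t) :
    ∫ t in Ici a, c t = (∫ t in Ici a, e t) + V a := by
  have hV' : IntegrableOn V' (Ici a) :=
    (he.sub hc).congr_fun (fun t ht => by simp only [Pi.sub_apply, hce t ht]; ring)
      measurableSet_Ici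
  have hFTC : ∫ t in Ici a, V' t = -V a := by
    rw [integral_Ici_eq_integral_Ioi,
      integral_Ioi_of_hasDerivAt_of_tendsto' hV (hV'.mono_set Ioi_subset_Ici_self) hVlim,
      zero_sub]
  calc ∫ t in Ici a, c t = ∫ t in Ici a, (e t - V' t) :=
        setIntegral_congr_fun measurableSet_Ici hce
    _ = (∫ t in Ici a, e t) - ∫ t in Ici a, V' t := integral_sub he hV'
    _ = (∫ t in Ici a, e t) + V a := by rw [hFTC, sub_neg_eq_add]

theorem lqr_linear_feedback_optimal_general
    (n m : ℕ)
    (F P Q : Matrix (Fin n) (Fin n) ℝ)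
    (G S : Matrix (Fin n) (Fin m) ℝ)
    (R : Matrix (Fin m) (Fin m) ℝ)
    (K : Matrix (Fin m) (Fin n) ℝ)
    (hR : R.IsSymm) (hRpd : R.PosDef) (hP : P.IsSymm)
    (hARE : Fᵀ * P + P * F + Q = (P * G + S) * R⁻¹ * (P * G + S)ᵀ)
    (hK : K = -(R⁻¹ * (P * G + S)ᵀ))
    (z : ℝ → Fin n → ℝ) (u : ℝ → Fin m → ℝ)
    (hz : ∀ t ∈ Set.Ici (0:ℝ),
      HasDerivAt z (F.mulVec (z t) + G.mulVec (u t)) t)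
    (hlim : Tendsto z atTop (nhds 0))
    (hint1 : IntegrableOn
      (fun t => z t ⬝ᵥ Q.mulVec (z t) + 2 * (z t ⬝ᵥ S.mulVec (u t))
        + u t ⬝ᵥ R.mulVec (u t)) (Set.Ici (0:ℝ)))
    (hint2 : IntegrableOn
      (fun t => (u t - K.mulVec (z t)) ⬝ᵥ R.mulVec (u t - K.mulVec (z t)))
      (Set.Ici (0:ℝ))) :
    (1/2 : ℝ) * ∫ t in Set.Ici (0:ℝ),
        (z t ⬝ᵥ Q.mulVec (z t) + 2 * (z t ⬝ᵥ S.mulVec (u t))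
          + u t ⬝ᵥ R.mulVec (u t))
      ≥ (1/2 : ℝ) * (z 0 ⬝ᵥ P.mulVec (z 0))
    ∧ ((∀ t ∈ Set.Ici (0:ℝ), u t = K.mulVec (z t)) →
        (1/2 : ℝ) * ∫ t in Set.Ici (0:ℝ),
          (z t ⬝ᵥ Q.mulVec (z t) + 2 * (z t ⬝ᵥ S.mulVec (u t))
            + u t ⬝ᵥ R.mulVec (u t))
        = (1/2 : ℝ) * (z 0 ⬝ᵥ P.mulVec (z 0))) := by
  have hRdet : IsUnit R.det := (isUnit_iff_isUnit_det R).mp hRpd.isUnit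
  have hVlim : Tendsto (fun t => z t ⬝ᵥ P *ᵥ z t) atTop (𝓝 0) := by
    have hcont : Continuous fun x : Fin n → ℝ => x ⬝ᵥ P *ᵥ x :=
      continuous_id.dotProduct (continuous_const.matrix_mulVec continuous_id)
    simpa [Function.comp_def] using (hcont.tendsto 0).comp hlim
  have hcost := setIntegral_Ici_eq_integral_add_of_eq_sub_deriv
    (fun t ht => (hz t ht).dotProduct ((hz t ht).mulVec P)) hVlim hint1 hint2
    (fun t _ => riccati_cost_eq_sub_lyapunov_deriv hRdet hR hP hARE hK (z t) (u t))
  refine ⟨?_, fun hopt => ?_⟩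
  · have hexcess : 0 ≤ ∫ t in Ici (0:ℝ), (u t - K *ᵥ z t) ⬝ᵥ R *ᵥ (u t - K *ᵥ z t) :=
      setIntegral_nonneg measurableSet_Ici fun t _ => by
        simpa using hRpd.posSemidef.dotProduct_mulVec_nonneg (u t - K *ᵥ z t)
    rw [hcost]
    linarith
  · rw [hcost, setIntegral_eq_zero_of_forall_eq_zero fun t ht => by simp [hopt t ht], zero_add]

theorem lqr_linear_feedback_optimal
    (n m : ℕ) (hn : 0 < n) (hm : 0 < m)
    (F P Q : Matrix (Fin n) (Fin n) ℝ)
    (G S : Matrix (Fin n) (Fin m) ℝ)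
    (R : Matrix (Fin m) (Fin m) ℝ)
    (K : Matrix (Fin m) (Fin n) ℝ)
    (hQ : Q.IsSymm) (hR : R.IsSymm) (hRpd : R.PosDef) (hP : P.IsSymm)
    (hARE : Fᵀ * P + P * F + Q = (P * G + S) * R⁻¹ * (P * G + S)ᵀ)
    (hK : K = -(R⁻¹ * (P * G + S)ᵀ))
    (z : ℝ → Fin n → ℝ) (u : ℝ → Fin m → ℝ)
    (hz : ∀ t ∈ Set.Ici (0:ℝ),
      HasDerivAt z (F.mulVec (z t) + G.mulVec (u t)) t)
    (hu : ContinuousOn u (Set.Ici (0:ℝ)))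
    (hlim : Tendsto z atTop (nhds 0))
    (hint1 : IntegrableOn
      (fun t => z t ⬝ᵥ Q.mulVec (z t) + 2 * (z t ⬝ᵥ S.mulVec (u t))
        + u t ⬝ᵥ R.mulVec (u t)) (Set.Ici (0:ℝ)))
    (hint2 : IntegrableOn
      (fun t => (u t - K.mulVec (z t)) ⬝ᵥ R.mulVec (u t - K.mulVec (z t)))
      (Set.Ici (0:ℝ))) :
    (1/2 : ℝ) * ∫ t in Set.Ici (0:ℝ),
        (z t ⬝ᵥ Q.mulVec (z t) + 2 * (z t ⬝ᵥ S.mulVec (u t))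
          + u t ⬝ᵥ R.mulVec (u t))
      ≥ (1/2 : ℝ) * (z 0 ⬝ᵥ P.mulVec (z 0))
    ∧ ((∀ t ∈ Set.Ici (0:ℝ), u t = K.mulVec (z t)) →
        (1/2 : ℝ) * ∫ t in Set.Ici (0:ℝ),
          (z t ⬝ᵥ Q.mulVec (z t) + 2 * (z t ⬝ᵥ S.mulVec (u t))
            + u t ⬝ᵥ R.mulVec (u t))
        = (1/2 : ℝ) * (z 0 ⬝ᵥ P.mulVec (z 0))) :=
  lqr_linear_feedback_optimal_general n m F P Q G S R K hR hRpd hP hARE hK z u hz hlim hint1 hint2
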